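/- arXiv:1812.09704 — 8 statements merged into one kernel-verified Lean document; each statement's English description precedes it below -/
import Mathlib

section
/- Let (R, m) be a commutative noetherian local ring and M an R-module with M ≠ mM. Then depth_R M ≤ ldim_R M ≤ dim_R M, where ldim_R M = inf { dim_R (Rx) : x ∈ M \ mM } is the little dimension of M. -/
open IsLocalRing CategoryTheory

/-- Krull dimension of a module: the Krull dimension of its support. -/
noncomputable def mdim (R : Type*) [CommRing R] (M : Type*) [AddCommGroup M] [Module R M] :
    WithBot ℕ∞ :=
  Order.krullDim (Module.support R M)

/-- The little dimension of a module over a local ring: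
`ldim_R M = inf { dim_R (Rx) : x ∈ M \ mM }` (infimum over the empty set is `⊤`). -/
noncomputable def ldim (R : Type*) [CommRing R] [IsLocalRing R] (M : Type*) [AddCommGroup M]
    [Module R M] : WithBot ℕ∞ :=
  ⨅ x : {x : M // x ∉ (maximalIdeal R • ⊤ : Submodule R M)},
    mdim R (Submodule.span R {x.1})

/-- Depth of a module over a local ring: the supremum of lengths of regular sequences on `M`
consisting of elements of the maximal ideal. -/
noncomputable def mdepth (R : Type*) [CommRing R] [IsLocalRing R] (M : Type*) [AddCommGroup M]
    [Module R M] : ℕ∞ :=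
  sSup {n : ℕ∞ | ∃ rs : List R, (rs.length : ℕ∞) = n ∧ (∀ r ∈ rs, r ∈ maximalIdeal R) ∧
    RingTheory.Sequence.IsRegular M rs}

/-!
If `r₁, …, rₙ` is a weakly `M`-regular sequence in an ideal `I` and `x ∉ I M`, then the image of
`x` in `M / r₁ M` still lies outside `I (M / r₁ M)`, so by induction there is a chain of primes
`p₁ < ⋯ < pₙ` above the annihilator of that image, with `r₁ ∈ p₁`. A minimal prime `q ⊆ p₁` of
`ann x` cannot contain `r₁`, which is a nonzerodivisor on `R x`; hence `q < p₁` extends the chain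
to length `n` inside the support of `R x`. This gives `depth M ≤ dim R x` for every `x ∉ 𝔪 M`,
while `dim R x ≤ dim M` because `Supp (R x) ⊆ Supp M`.
-/

section

variable {R : Type*} [CommRing R] {M : Type*} [AddCommGroup M] [Module R M]

open Submodule Pointwise

theorem Submodule.mkQ_notMem_smul_top {N : Submodule R M} {I : Ideal R} (hN : N ≤ I • ⊤)
    {x : M} (hx : x ∉ I • (⊤ : Submodule R M)) :
    N.mkQ x ∉ I • (⊤ : Submodule R (M ⧸ N)) := by
  rwa [← range_mkQ N, ← map_top, ← map_smul'', ← mem_comap, comap_map_mkQ, sup_eq_right.mpr hN]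

theorem Submodule.pointwise_smul_le_ideal_smul {I : Ideal R} {r : R} (hr : r ∈ I)
    (N : Submodule R M) : r • N ≤ I • N := by
  rw [← ideal_span_singleton_smul]
  exact smul_mono_left ((Ideal.span_singleton_le_iff_mem I).mpr hr)

theorem IsSMulRegular.exists_torsionOf_le_lt {r : R} (hr : IsSMulRegular M r) (x : M)
    {p : PrimeSpectrum R} (hxp : Ideal.torsionOf R M x ≤ p.asIdeal) (hrp : r ∈ p.asIdeal) :
    ∃ q : PrimeSpectrum R, Ideal.torsionOf R M x ≤ q.asIdeal ∧ q < p := by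
  obtain ⟨q, hq, hqp⟩ := Ideal.exists_minimalPrimes_le hxp
  have hrq : r ∉ q := by
    rw [← Ideal.annihilator_span_singleton_eq_torsionOf] at hq
    exact (hr.submodule (R ∙ x)).notMem_of_mem_minimalPrimes hq
  exact ⟨⟨q, hq.isPrime⟩, hq.le, lt_of_le_of_ne hqp (by rintro rfl; exact hrq hrp)⟩

open RingTheory.Sequence in
theorem exists_ltSeries_torsionOf_le_head_of_isWeaklyRegular {I : Ideal R} (rs : List R)
    (hrs : ∀ r ∈ rs, r ∈ I) (hreg : IsWeaklyRegular M rs) {x : M}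
    (hx : x ∉ I • (⊤ : Submodule R M)) :
    ∃ l : LTSeries (PrimeSpectrum R), l.length = rs.length ∧
      Ideal.torsionOf R M x ≤ l.head.asIdeal := by
  induction rs generalizing M with
  | nil =>
    have hx0 : x ≠ 0 := fun h => hx (h ▸ zero_mem _)
    obtain ⟨m, hm, hxm⟩ := Ideal.exists_le_maximal _ (mt (Ideal.torsionOf_eq_top_iff R x).mp hx0)
    exact ⟨RelSeries.singleton _ ⟨m, hm.isPrime⟩, rfl, hxm⟩
  | cons r rs ih =>
    obtain ⟨hr, hreg⟩ := (isWeaklyRegular_cons_iff M r rs).mp hreg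
    have hrI : r ∈ I := hrs r List.mem_cons_self
    let x' : QuotSMulTop r M := (r • ⊤ : Submodule R M).mkQ x
    obtain ⟨l, hlen, hhead⟩ := ih (fun s hs => hrs s (List.mem_cons_of_mem r hs)) hreg
      (x := x') (mkQ_notMem_smul_top (pointwise_smul_le_ideal_smul hrI ⊤) hx)
    have htors : Ideal.torsionOf R M x ≤ Ideal.torsionOf R _ x' := fun a ha => by
      rw [Ideal.mem_torsionOf_iff] at ha ⊢
      rw [← map_smul, ha, map_zero]
    have hrx' : r ∈ Ideal.torsionOf R _ x' := by
      rw [Ideal.mem_torsionOf_iff, ← map_smul, mkQ_apply, Quotient.mk_eq_zero]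
      exact smul_mem_pointwise_smul x r ⊤ trivial
    obtain ⟨q, hxq, hq⟩ := hr.exists_torsionOf_le_lt x (htors.trans hhead) (hhead hrx')
    exact ⟨l.cons q hq, by simp [hlen], hxq⟩

theorem length_le_mdim_span {x : M} (l : LTSeries (PrimeSpectrum R))
    (hl : Ideal.torsionOf R M x ≤ l.head.asIdeal) :
    (l.length : WithBot ℕ∞) ≤ mdim R (R ∙ x) := by
  have hsupp (i : Fin (l.length + 1)) : l i ∈ Module.support R (R ∙ x) := by
    rw [Module.mem_support_iff_of_finite]
    exact (Ideal.annihilator_span_singleton_eq_torsionOf x).le.trans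
      (hl.trans (l.monotone (Fin.zero_le i)))
  exact Order.LTSeries.length_le_krullDim
    { length := l.length
      toFun i := ⟨l i, hsupp i⟩
      step i := l.step i }

theorem mdim_le_of_injective {N : Type*} [AddCommGroup N] [Module R N] {f : N →ₗ[R] M}
    (hf : Function.Injective f) : mdim R N ≤ mdim R M :=
  Order.krullDim_le_of_strictMono (Set.inclusion (Module.support_subset_of_injective f hf))
    fun _ _ h => h

end

theorem WithBot.coe_sSup_le_of_ne_bot {α : Type*} [CompleteLattice α] {S : Set α}
    {d : WithBot α} (hd : d ≠ ⊥) (h : ∀ a ∈ S, (a : WithBot α) ≤ d) :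
    ((sSup S : α) : WithBot α) ≤ d := by
  lift d to α using hd
  exact WithBot.coe_le_coe.mpr (sSup_le fun a ha => WithBot.coe_le_coe.mp (h a ha))

section

variable {R : Type*} [CommRing R] [IsLocalRing R] {M : Type*} [AddCommGroup M] [Module R M]

theorem mdepth_le_mdim_span {x : M} (hx : x ∉ (maximalIdeal R • ⊤ : Submodule R M)) :
    (mdepth R M : WithBot ℕ∞) ≤ mdim R (R ∙ x) := by
  have hchain {rs : List R} (hrs : ∀ r ∈ rs, r ∈ maximalIdeal R)
      (hreg : RingTheory.Sequence.IsWeaklyRegular M rs) :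
      (rs.length : WithBot ℕ∞) ≤ mdim R (R ∙ x) := by
    obtain ⟨l, hlen, hl⟩ := exists_ltSeries_torsionOf_le_head_of_isWeaklyRegular rs hrs hreg hx
    exact hlen ▸ length_le_mdim_span l hl
  have hne : mdim R (R ∙ x) ≠ ⊥ :=
    ne_bot_of_le_ne_bot (WithBot.coe_ne_bot (a := (0 : ℕ∞)))
      (hchain (rs := []) (by simp) (RingTheory.Sequence.IsWeaklyRegular.nil R M))
  refine WithBot.coe_sSup_le_of_ne_bot hne ?_
  rintro _ ⟨rs, rfl, hrs, hreg⟩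
  exact_mod_cast hchain hrs hreg.toIsWeaklyRegular

theorem mdepth_le_ldim : (mdepth R M : WithBot ℕ∞) ≤ ldim R M :=
  le_iInf fun x => mdepth_le_mdim_span x.2

theorem ldim_le_mdim_span {x : M} (hx : x ∉ (maximalIdeal R • ⊤ : Submodule R M)) :
    ldim R M ≤ mdim R (R ∙ x) :=
  iInf_le (fun y : {y : M // y ∉ (maximalIdeal R • ⊤ : Submodule R M)} => mdim R (R ∙ y.1)) ⟨x, hx⟩

theorem ldim_le_mdim (hM : (maximalIdeal R • ⊤ : Submodule R M) ≠ ⊤) : ldim R M ≤ mdim R M := by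
  obtain ⟨x, -, hx⟩ := SetLike.exists_of_lt (lt_top_iff_ne_top.mpr hM)
  exact (ldim_le_mdim_span hx).trans (mdim_le_of_injective (R ∙ x).injective_subtype)

end

theorem stmt_0_general (R : Type*) [CommRing R] [IsLocalRing R]
    (M : Type*) [AddCommGroup M] [Module R M]
    (hM : (maximalIdeal R • ⊤ : Submodule R M) ≠ ⊤) :
    (mdepth R M : WithBot ℕ∞) ≤ ldim R M ∧ ldim R M ≤ mdim R M :=
  ⟨mdepth_le_ldim, ldim_le_mdim hM⟩

/-- `depth_R M ≤ ldim_R M ≤ dim_R M` for a module `M` with `M ≠ mM` over a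
commutative noetherian local ring. -/
theorem stmt_0 (R : Type*) [CommRing R] [IsLocalRing R] [IsNoetherianRing R]
    (M : Type*) [AddCommGroup M] [Module R M]
    (hM : (maximalIdeal R • ⊤ : Submodule R M) ≠ ⊤) :
    (mdepth R M : WithBot ℕ∞) ≤ ldim R M ∧ ldim R M ≤ mdim R M :=
  stmt_0_general R M hM
end

section
/- Let (R, m) be a commutative noetherian local ring and let M, N be R-modules with M ≠ mM and N ≠ mN. Then ldim_R(M ⊗_R N) ≤ min{ ldim_R M, ldim_R N }. -/
open IsLocalRing CategoryTheory

/-!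
If `x ∉ 𝔪M` and `y ∉ 𝔪N`, pick `R`-linear maps `f : M → R/𝔪`, `g : N → R/𝔪` with `f x ≠ 0 ≠ g y`
(possible since `M/𝔪M` is a vector space over the field `R/𝔪`). Then `m ⊗ n ↦ f m * g n` kills
`𝔪(M ⊗ N)` but not `x ⊗ y`, so `x ⊗ y ∉ 𝔪(M ⊗ N)`. As `R(x ⊗ y)` is a quotient of both `Rx`
and `Ry`, its support, hence its dimension, is bounded by theirs.
-/

open TensorProduct

section

variable {R : Type*} [CommRing R] {M N : Type*} [AddCommGroup M] [Module R M]
  [AddCommGroup N] [Module R N]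

lemma exists_linearMap_quotient_apply_ne_zero (I : Ideal R) [I.IsMaximal] {x : M}
    (hx : x ∉ (I • ⊤ : Submodule R M)) : ∃ f : M →ₗ[R] R ⧸ I, f x ≠ 0 := by
  let := Ideal.Quotient.field I
  have hx' : (I • ⊤ : Submodule R M).mkQ x ≠ 0 := by
    simpa [Submodule.Quotient.mk_eq_zero] using hx
  obtain ⟨φ, hφ⟩ : ∃ φ : Module.Dual (R ⧸ I) (M ⧸ (I • ⊤ : Submodule R M)),
      φ ((I • ⊤ : Submodule R M).mkQ x) ≠ 0 := by
    by_contra! h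
    exact hx' ((Module.forall_dual_apply_eq_zero_iff _ _).mp h)
  exact ⟨φ.restrictScalars R ∘ₗ (I • ⊤ : Submodule R M).mkQ, hφ⟩

lemma tmul_notMem_smul_top (I : Ideal R) [I.IsMaximal] {x : M} {y : N}
    (hx : x ∉ (I • ⊤ : Submodule R M)) (hy : y ∉ (I • ⊤ : Submodule R N)) :
    x ⊗ₜ[R] y ∉ (I • ⊤ : Submodule R (M ⊗[R] N)) := by
  obtain ⟨f, hf⟩ := exists_linearMap_quotient_apply_ne_zero I hx
  obtain ⟨g, hg⟩ := exists_linearMap_quotient_apply_ne_zero I hy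
  let h : M ⊗[R] N →ₗ[R] R ⧸ I := LinearMap.mul' R (R ⧸ I) ∘ₗ map f g
  have hker : (I • ⊤ : Submodule R (M ⊗[R] N)) ≤ LinearMap.ker h := by
    refine Submodule.smul_le.mpr fun r hr z _ => ?_
    rw [LinearMap.mem_ker, map_smul, Algebra.smul_def, Ideal.Quotient.algebraMap_eq,
      Ideal.Quotient.eq_zero_iff_mem.mpr hr, zero_mul]
  exact fun hmem => mul_ne_zero hf hg (hker hmem)

lemma mdim_span_singleton_map_le (f : M →ₗ[R] N) (x : M) :
    mdim R (Submodule.span R {f x}) ≤ mdim R (Submodule.span R {x}) := by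
  have hspan : (Submodule.span R {x}).map f = Submodule.span R {f x} := by
    rw [Submodule.map_span, Set.image_singleton]
  exact Module.supportDim_le_of_surjective
    ((LinearEquiv.ofEq _ _ hspan).toLinearMap ∘ₗ f.submoduleMap _)
    ((LinearEquiv.ofEq _ _ hspan).surjective.comp (f.submoduleMap_surjective _))

end

theorem stmt_2_general (R : Type*) [CommRing R] [IsLocalRing R]
    (M N : Type*) [AddCommGroup M] [Module R M] [AddCommGroup N] [Module R N]
    (hM : (maximalIdeal R • ⊤ : Submodule R M) ≠ ⊤)
    (hN : (maximalIdeal R • ⊤ : Submodule R N) ≠ ⊤) :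
    ldim R (TensorProduct R M N) ≤ min (ldim R M) (ldim R N) := by
  obtain ⟨x₀, -, hx₀⟩ := SetLike.exists_of_lt (lt_top_iff_ne_top.mpr hM)
  obtain ⟨y₀, -, hy₀⟩ := SetLike.exists_of_lt (lt_top_iff_ne_top.mpr hN)
  refine le_min (le_iInf fun x => ?_) (le_iInf fun y => ?_)
  · exact iInf_le_of_le ⟨x.1 ⊗ₜ[R] y₀, tmul_notMem_smul_top _ x.2 hy₀⟩
      (mdim_span_singleton_map_le ((mk R M N).flip y₀) x.1)
  · exact iInf_le_of_le ⟨x₀ ⊗ₜ[R] y.1, tmul_notMem_smul_top _ hx₀ y.2⟩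
      (mdim_span_singleton_map_le (mk R M N x₀) y.1)

/-- `ldim_R (M ⊗_R N) ≤ min (ldim_R M) (ldim_R N)` when `M ≠ mM` and `N ≠ mN`. -/
theorem stmt_2 (R : Type*) [CommRing R] [IsLocalRing R] [IsNoetherianRing R]
    (M N : Type*) [AddCommGroup M] [Module R M] [AddCommGroup N] [Module R N]
    (hM : (maximalIdeal R • ⊤ : Submodule R M) ≠ ⊤)
    (hN : (maximalIdeal R • ⊤ : Submodule R N) ≠ ⊤) :
    ldim R (TensorProduct R M N) ≤ min (ldim R M) (ldim R N) :=
  stmt_2_general R M N hM hN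
end

section
/- Let (R, m) be a commutative noetherian local ring and I a proper ideal of R. Then ldim_R (R/I) = dim R/I, i.e., the little dimension of the cyclic module R/I equals its Krull dimension. -/
open IsLocalRing CategoryTheory

/-- for a proper ideal `I`, `ldim_R (R/I) = dim_R (R/I)`. -/
theorem stmt_4 (R : Type*) [CommRing R] [IsLocalRing R] [IsNoetherianRing R]
    (I : Ideal R) (hI : I ≠ ⊤) :
    ldim R (R ⧸ I) = mdim R (R ⧸ I) := by
  classical
  have hsmul : (maximalIdeal R • ⊤ : Submodule R (R ⧸ I))
      = ((maximalIdeal R).map (algebraMap R (R ⧸ I))).restrictScalars R :=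
    Ideal.smul_top_eq_map _
  -- every element outside `m • ⊤` generates the whole module
  have hspan : ∀ x : R ⧸ I, x ∉ (maximalIdeal R • ⊤ : Submodule R (R ⧸ I)) →
      Submodule.span R ({x} : Set (R ⧸ I)) = ⊤ := by
    intro x hx
    obtain ⟨r, rfl⟩ := Ideal.Quotient.mk_surjective x
    have hr : r ∉ maximalIdeal R := by
      intro hr
      apply hx
      rw [hsmul]
      exact Ideal.mem_map_of_mem _ hr
    have hu' : IsUnit r := by
      by_contra h
      exact hr ((IsLocalRing.mem_maximalIdeal r).mpr h)
    obtain ⟨u, hu⟩ := hu' 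
    rw [eq_top_iff]
    rintro y -
    obtain ⟨s, rfl⟩ := Ideal.Quotient.mk_surjective y
    rw [Submodule.mem_span_singleton]
    refine ⟨s * ↑u⁻¹, ?_⟩
    have : (Ideal.Quotient.mk I) ((s * ↑u⁻¹) * r) = Ideal.Quotient.mk I s := by
      rw [mul_assoc, ← hu]
      simp
    simpa [Algebra.smul_def, Ideal.Quotient.algebraMap_eq, mul_comm] using this
  -- the index set is nonempty: the class of `1` works
  have hne : Nonempty {x : R ⧸ I //
      x ∉ (maximalIdeal R • ⊤ : Submodule R (R ⧸ I))} := by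
    refine ⟨⟨Ideal.Quotient.mk I 1, ?_⟩⟩
    intro h1
    rw [hsmul] at h1
    have h1' : (1 : R ⧸ I) ∈ (maximalIdeal R).map (algebraMap R (R ⧸ I)) := h1
    have htop : (maximalIdeal R).map (algebraMap R (R ⧸ I)) = ⊤ :=
      (Ideal.eq_top_iff_one _).mpr (by simpa using h1')
    have hc : Ideal.comap (algebraMap R (R ⧸ I)) ((maximalIdeal R).map
        (algebraMap R (R ⧸ I))) = maximalIdeal R := by
      rw [Ideal.Quotient.algebraMap_eq,
        Ideal.comap_map_of_surjective _ Ideal.Quotient.mk_surjective]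
      have : Ideal.comap (Ideal.Quotient.mk I) (⊥ : Ideal (R ⧸ I)) = I := by
        exact Ideal.mk_ker
      rw [this]
      exact sup_eq_left.mpr (le_maximalIdeal hI)
    have : (maximalIdeal R) = ⊤ := by
      rw [← hc, htop, Ideal.comap_top]
    exact (IsLocalRing.maximalIdeal.isMaximal R).ne_top this
  unfold ldim
  rw [iInf_congr (fun x => ?_), iInf_const]
  have := hspan x.1 x.2
  rw [this]
  unfold mdim
  rw [LinearEquiv.support_eq (Submodule.topEquiv (R := R) (M := R ⧸ I))]
end

section
/- Let (R, m) be a commutative noetherian local ring and M ≠ 0 a finitely generated R-module that is unmixed, i.e., Ass_R M = Assh_R M where Assh_R M is the set of primes p in Supp_R M with dim R/p = dim_R M. Then ldim_R M = dim_R M. -/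
/-!
For `x ≠ 0`, some associated prime `p` of `M` contains `ann x`, so `R ⧸ p` is a quotient of
`R ⧸ ann x` and `dim Rx = dim R ⧸ ann x ≥ dim R ⧸ p`, which unmixedness makes equal to `dim M`;
conversely `Rx ⊆ M`. Hence every term of the infimum defining `ldim` equals `dim M`, and by
Nakayama there is at least one term.
-/

open IsLocalRing CategoryTheory

namespace Module

variable {R M : Type*} [CommRing R] [AddCommGroup M] [Module R M]

lemma ringKrullDim_quotient_le_supportDim [Module.Finite R M] {p : Ideal R}
    (hp : annihilator R M ≤ p) : ringKrullDim (R ⧸ p) ≤ supportDim R M := by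
  rw [supportDim_eq_ringKrullDim_quotient_annihilator]
  exact ringKrullDim_le_of_surjective _ (Ideal.Quotient.factor_surjective hp)

lemma supportDim_span_singleton_eq [IsNoetherianRing R]
    (hdim : ∀ p ∈ associatedPrimes R M, ringKrullDim (R ⧸ p) = supportDim R M)
    {x : M} (hx : x ≠ 0) : supportDim R (Submodule.span R {x}) = supportDim R M := by
  refine le_antisymm (supportDim_le_of_injective _ (Submodule.span R {x}).injective_subtype) ?_
  obtain ⟨p, hp, hle⟩ := exists_le_isAssociatedPrime_of_isNoetherianRing R x hx
  rw [← hdim p hp]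
  rw [Submodule.bot_colon'] at hle
  exact ringKrullDim_quotient_le_supportDim hle

lemma exists_notMem_maximalIdeal_smul_top [IsLocalRing R] [Module.Finite R M] [Nontrivial M] :
    ∃ x : M, x ∉ maximalIdeal R • (⊤ : Submodule R M) := by
  by_contra! h
  exact Submodule.top_ne_ideal_smul_of_le_jacobson_annihilator (maximalIdeal_le_jacobson _)
    (Submodule.eq_top_iff'.mpr h).symm

end Module

/-- if a nonzero finitely generated module `M` is unmixed
(`Ass_R M = Assh_R M`), then `ldim_R M = dim_R M`. -/
theorem stmt_5 (R : Type*) [CommRing R] [IsLocalRing R] [IsNoetherianRing R]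
    (M : Type*) [AddCommGroup M] [Module R M] [Module.Finite R M] [Nontrivial M]
    (hunmixed : associatedPrimes R M =
      {p : Ideal R | ∃ hp : p.IsPrime, (⟨p, hp⟩ : PrimeSpectrum R) ∈ Module.support R M ∧
        ringKrullDim (R ⧸ p) = mdim R M}) :
    ldim R M = mdim R M := by
  have hdim (p) (hp : p ∈ associatedPrimes R M) : ringKrullDim (R ⧸ p) = mdim R M := by
    rw [hunmixed] at hp
    exact hp.2.2
  obtain ⟨x, hx⟩ := Module.exists_notMem_maximalIdeal_smul_top (R := R) (M := M)
  have : Nonempty {x : M // x ∉ (maximalIdeal R • ⊤ : Submodule R M)} := ⟨⟨x, hx⟩⟩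
  have hspan (y : {x : M // x ∉ (maximalIdeal R • ⊤ : Submodule R M)}) :
      mdim R (Submodule.span R {y.1}) = mdim R M :=
    Module.supportDim_span_singleton_eq hdim fun h => y.2 (h ▸ Submodule.zero_mem _)
  rw [ldim, iInf_congr hspan, iInf_const]
end

section
/- Let R be a commutative noetherian local ring with a unique associated prime (coprimary), and let I be a nonzero ideal of R regarded as an R-module. Then ldim_R I = dim_R I = dim R. -/
open IsLocalRing CategoryTheory

/-!
In a noetherian ring every minimal prime is associated, so the unique associated prime `p` of a
coprimary ring lies in every prime ideal. A nonzero submodule `M` of `R` has an associated prime,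
which is then `p`; hence `Spec R = V(p) ⊆ Supp M`, and `M`, as well as each of its nonzero cyclic
submodules, has dimension `dim R`. By Nakayama the infimum defining `ldim` is over a nonempty set.
-/

section

variable {R : Type*} [CommRing R] {M : Type*} [AddCommGroup M] [Module R M]

variable (R) in
theorem minimalPrimes_subset_associatedPrimes_self [IsNoetherianRing R] :
    minimalPrimes R ⊆ associatedPrimes R R := by
  simpa [Module.annihilator_eq_bot.mpr inferInstance] using
    Module.associatedPrimes.minimalPrimes_annihilator_subset_associatedPrimes R R

theorem le_of_forall_mem_associatedPrimes_eq [IsNoetherianRing R] {p J : Ideal R}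
    (hp : ∀ q ∈ associatedPrimes R R, q = p) (hJ : J.IsPrime) : p ≤ J := by
  obtain ⟨q, hq, hqJ⟩ := Ideal.exists_minimalPrimes_le (bot_le : ⊥ ≤ J)
  rwa [← hp q (minimalPrimes_subset_associatedPrimes_self R hq)]

theorem IsAssociatedPrime.mem_support {p : PrimeSpectrum R}
    (h : IsAssociatedPrime p.asIdeal M) : p ∈ Module.support R M := by
  obtain ⟨x, hx⟩ := h.eq_radical_colon
  refine Module.mem_support_iff_exists_annihilator.mpr ⟨x, fun r hr => hx ▸ Ideal.le_radical ?_⟩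
  rw [Submodule.mem_colon_singleton, Submodule.mem_bot]
  exact (Submodule.mem_annihilator_span_singleton x r).mp hr

theorem Module.support_eq_univ_of_injective [IsNoetherianRing R]
    (hcop : ∃! p : Ideal R, p ∈ associatedPrimes R R) [Nontrivial M]
    {f : M →ₗ[R] R} (hf : Function.Injective f) : Module.support R M = Set.univ := by
  obtain ⟨p, -, hp⟩ := hcop
  obtain ⟨P, hP⟩ := associatedPrimes.nonempty R M
  obtain rfl : P = p := hp P (associatedPrimes.subset_of_injective hf hP)
  exact Set.eq_univ_of_forall fun J => Module.mem_support_mono (p := ⟨P, hP.isPrime⟩)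
    (le_of_forall_mem_associatedPrimes_eq hp J.isPrime) (IsAssociatedPrime.mem_support hP)

theorem mdim_eq_ringKrullDim_of_injective [IsNoetherianRing R]
    (hcop : ∃! p : Ideal R, p ∈ associatedPrimes R R) [Nontrivial M]
    {f : M →ₗ[R] R} (hf : Function.Injective f) : mdim R M = ringKrullDim R := by
  unfold mdim
  rw [Module.support_eq_univ_of_injective hcop hf]
  exact Order.krullDim_eq_of_orderIso OrderIso.Set.univ

theorem ldim_eq_of_forall_ne_zero [IsLocalRing R] [Module.Finite R M] [Nontrivial M]
    {d : WithBot ℕ∞} (h : ∀ x : M, x ≠ 0 → mdim R (Submodule.span R {x}) = d) :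
    ldim R M = d := by
  have hne : (⊤ : Submodule R M) ≠ maximalIdeal R • ⊤ :=
    Submodule.top_ne_ideal_smul_of_le_jacobson_annihilator (maximalIdeal_le_jacobson _)
  obtain ⟨x₀, hx₀⟩ : ∃ x : M, x ∉ maximalIdeal R • (⊤ : Submodule R M) := by
    by_contra! hall
    exact hne (eq_top_iff.mpr fun x _ => hall x).symm
  have : Nonempty {x : M // x ∉ (maximalIdeal R • ⊤ : Submodule R M)} := ⟨⟨x₀, hx₀⟩⟩
  have hx : ∀ x : {x : M // x ∉ (maximalIdeal R • ⊤ : Submodule R M)},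
      mdim R (Submodule.span R {x.1}) = d :=
    fun x => h x.1 fun h0 => x.2 (h0 ▸ Submodule.zero_mem _)
  rw [ldim, iInf_congr hx, iInf_const]

end

/-- if `R` is coprimary (a unique associated prime) and `I` is a nonzero
ideal, then `ldim_R I = dim_R I = dim R`. -/
theorem stmt_6 (R : Type*) [CommRing R] [IsLocalRing R] [IsNoetherianRing R]
    (hcop : ∃! p : Ideal R, p ∈ associatedPrimes R R)
    (I : Ideal R) (hI : I ≠ ⊥) :
    ldim R I = mdim R I ∧ mdim R I = ringKrullDim R := by
  have : Nontrivial I := Submodule.nontrivial_iff_ne_bot.mpr hI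
  have hdim : mdim R I = ringKrullDim R :=
    mdim_eq_ringKrullDim_of_injective hcop I.injective_subtype
  refine ⟨(ldim_eq_of_forall_ne_zero fun x hx => ?_).trans hdim.symm, hdim⟩
  have : Nontrivial (Submodule.span R {x}) :=
    Submodule.nontrivial_iff_ne_bot.mpr (mt Submodule.span_singleton_eq_bot.mp hx)
  exact mdim_eq_ringKrullDim_of_injective hcop (f := I.subtype ∘ₗ (Submodule.span R {x}).subtype)
    (I.injective_subtype.comp (Submodule.span R {x}).injective_subtype)
end

section
/- Let (R, m) be a commutative noetherian local ring with depth R = 0, and let x be a minimal generator of m such that p = (x) is prime, ann(x) is not m-primary, Assh R = {p}, and R_p is a field. Then, regarding m as an R-module, one has the strict inequalities depth_R m < ldim_R m < dim_R m. -/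
/-!
Since `R_(x)` is a field, some `s ∉ (x)` kills `x`; in particular `(x) ≠ m` and `ann(x) ⊄ (x)`.
As `(x)` is the only prime of maximal dimension, every prime over `ann(x)` has dimension below
`dim R`, whence `ldim m ≤ dim Rx = dim R/ann(x) < dim R = dim R/(x) ≤ dim m`, the last step
because `ann(m) ⊆ (x)`.

For the lower bounds: an element of `m` regular on `m` is regular on `R`, so `depth m = 0`.
If `y ∈ m \ m²` had `ann(y)` `m`-primary, then `m^n y = 0` with `m^n ⊄ (x)` puts `y` in the
prime `(x)`, so `y` is a unit multiple of `x` and `ann(y) = ann(x)` would be `m`-primary too;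
hence `dim Ry ≥ 1`.
-/

open IsLocalRing CategoryTheory

open RingTheory.Sequence

section Depth

variable {R : Type*} [CommRing R] [IsLocalRing R]

theorem mdepth_eq_zero_iff {M : Type*} [AddCommGroup M] [Module R M] [Module.Finite R M]
    [Nontrivial M] : mdepth R M = 0 ↔ ∀ r ∈ maximalIdeal R, ¬ IsSMulRegular M r := by
  constructor
  · intro h r hr hreg
    have hmem : ∀ s ∈ [r], s ∈ maximalIdeal R := by simpa using hr
    have hle : (1 : ℕ∞) ≤ mdepth R M := le_sSup ⟨[r], rfl, hmem,
      .of_isWeaklyRegular_of_mem_maximalIdeal M hmem ((isWeaklyRegular_singleton_iff M r).2 hreg)⟩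
    simp [h] at hle
  · intro h
    refine nonpos_iff_eq_zero.1 (sSup_le ?_)
    rintro n ⟨_ | ⟨r, rs⟩, rfl, hmem, hreg⟩
    · simp
    · exact absurd ((isRegular_cons_iff M r rs).1 hreg).1 (h r (hmem r List.mem_cons_self))

theorem IsSMulRegular.of_maximalIdeal [Nontrivial (maximalIdeal R)] {r : R}
    (hr : IsSMulRegular (maximalIdeal R) r) : IsSMulRegular R r := by
  refine isSMulRegular_iff_right_eq_zero_of_smul.2 fun a ha => ?_
  by_cases ham : a ∈ maximalIdeal R
  · exact congrArg Subtype.val (hr.right_eq_zero_of_smul (x := ⟨a, ham⟩) (Subtype.ext ha))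
  · have hr0 : r = 0 := ((notMem_maximalIdeal.1 ham).mul_left_eq_zero).1 ha
    exact absurd (hr0 ▸ hr) (IsSMulRegular.not_zero_iff.2 inferInstance)

theorem mdepth_maximalIdeal_eq_zero [IsNoetherianRing R] [Nontrivial (maximalIdeal R)]
    (h : mdepth R R = 0) : mdepth R (maximalIdeal R) = 0 :=
  mdepth_eq_zero_iff.2 fun r hr hreg => mdepth_eq_zero_iff.1 h r hr hreg.of_maximalIdeal

end Depth

section Dimension

variable {R : Type*} [CommRing R]

theorem exists_mem_minimalPrimes_length_le {I : Ideal R}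
    (l : LTSeries (PrimeSpectrum.zeroLocus (I : Set R))) :
    ∃ q ∈ I.minimalPrimes, (l.length : WithBot ℕ∞) ≤ ringKrullDim (R ⧸ q) := by
  obtain ⟨q, hq, hqle⟩ := Ideal.exists_minimalPrimes_le (J := l.head.1.asIdeal) l.head.2
  refine ⟨q, hq, ?_⟩
  let l' : LTSeries (PrimeSpectrum.zeroLocus (q : Set R)) :=
    { length := l.length
      toFun := fun i => ⟨(l i).1, hqle.trans (l.monotone (Fin.zero_le i))⟩
      step := fun i => l.step i }
  exact ringKrullDim_quotient q ▸ Order.LTSeries.length_le_krullDim l'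

theorem ringKrullDim_quotient_lt_of_forall_minimalPrimes [IsNoetherianRing R] [Nontrivial R]
    {I : Ideal R} (h : ∀ q ∈ I.minimalPrimes, ringKrullDim (R ⧸ q) < ringKrullDim R) :
    ringKrullDim (R ⧸ I) < ringKrullDim R := by
  have hfin := I.finite_minimalPrimes_of_isNoetherianRing R
  calc ringKrullDim (R ⧸ I) ≤ hfin.toFinset.sup fun q => ringKrullDim (R ⧸ q) := by
        rw [ringKrullDim_quotient]
        refine iSup_le fun l => ?_
        obtain ⟨q, hq, hl⟩ := exists_mem_minimalPrimes_length_le l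
        exact hl.trans (Finset.le_sup (f := fun q => ringKrullDim (R ⧸ q))
          (hfin.mem_toFinset.2 hq))
    _ < ringKrullDim R := by
        refine (Finset.sup_lt_iff ?_).2 fun q hq => h q (hfin.mem_toFinset.1 hq)
        exact (WithBot.bot_lt_coe 0).trans_le ringKrullDim_nonneg_of_nontrivial

theorem ringKrullDim_quotient_lt_of_not_le [IsNoetherianRing R] [Nontrivial R] {p I : Ideal R}
    (hAssh : {q : Ideal R | ∃ _ : q.IsPrime, ringKrullDim (R ⧸ q) = ringKrullDim R} = {p})
    (hI : ¬ I ≤ p) : ringKrullDim (R ⧸ I) < ringKrullDim R :=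
  ringKrullDim_quotient_lt_of_forall_minimalPrimes fun q hq =>
    (ringKrullDim_quotient_le q).lt_of_ne fun he =>
      hI (hAssh.subset ⟨hq.1.1, he⟩ ▸ hq.1.2)

variable {M : Type*} [AddCommGroup M] [Module R M]

theorem mdim_eq_ringKrullDim_quotient_annihilator [Module.Finite R M] :
    mdim R M = ringKrullDim (R ⧸ Module.annihilator R M) :=
  Module.supportDim_eq_ringKrullDim_quotient_annihilator R M

theorem ringKrullDim_quotient_le_mdim [Module.Finite R M] {p : Ideal R}
    (h : Module.annihilator R M ≤ p) : ringKrullDim (R ⧸ p) ≤ mdim R M :=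
  mdim_eq_ringKrullDim_quotient_annihilator (R := R) (M := M) ▸
    ringKrullDim_le_of_surjective _ (Ideal.Quotient.factor_surjective h)

theorem annihilator_span_singleton_coe {N : Submodule R M} (y : N) :
    Module.annihilator R (Submodule.span R {y}) = (Submodule.span R {(y : M)}).annihilator := by
  ext a
  simp [← Submodule.coe_eq_zero]

theorem one_le_mdim_of_radical_annihilator_ne [IsLocalRing R] [Module.Finite R M] [Nontrivial M]
    (h : (Module.annihilator R M).radical ≠ maximalIdeal R) : 1 ≤ mdim R M := by
  have hm := closedPoint_mem_support R M
  obtain ⟨q, hq, hqm⟩ : ∃ q ∈ Module.support R M, q ≠ closedPoint R := by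
    by_contra! hall
    refine h (le_antisymm ?_ ?_)
    · exact (maximalIdeal.isMaximal R).isPrime.radical_le_iff.2
        (Module.mem_support_iff_of_finite.1 hm)
    rw [Ideal.radical_eq_sInf]
    refine le_sInf fun J ⟨hJ, hJprime⟩ => ?_
    have := hall ⟨J, hJprime⟩ (Module.mem_support_iff_of_finite.2 hJ)
    exact (congrArg PrimeSpectrum.asIdeal this).ge
  exact Order.one_le_krullDim_iff.2 ⟨⟨q, hq⟩, ⟨_, hm⟩,
    lt_of_le_of_ne (le_maximalIdeal q.2.ne_top) fun h => hqm (congrArg Subtype.val h)⟩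

end Dimension

theorem exists_notMem_mul_eq_zero_of_isField_localization {R : Type*} [CommRing R]
    {p : Ideal R} [p.IsPrime]
    (h : IsField (Localization.AtPrime p)) {a : R} (ha : a ∈ p) : ∃ s ∉ p, s * a = 0 := by
  have hmap : algebraMap R (Localization.AtPrime p) a = 0 := by
    have := Ideal.mem_map_of_mem (algebraMap R (Localization.AtPrime p)) ha
    rwa [Localization.AtPrime.map_eq_maximalIdeal,
      IsLocalRing.isField_iff_maximalIdeal_eq.1 h, Ideal.mem_bot] at this
  obtain ⟨⟨s, hs⟩, hsa⟩ := (IsLocalization.map_eq_zero_iff p.primeCompl _ _).1 hmap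
  exact ⟨s, hs, hsa⟩

section MaximalIdeal

variable {R : Type*} [CommRing R] [IsLocalRing R]

theorem ldim_le_mdim_span_singleton {M : Type*} [AddCommGroup M] [Module R M] {y : M}
    (hy : y ∉ (maximalIdeal R • ⊤ : Submodule R M)) : ldim R M ≤ mdim R (Submodule.span R {y}) :=
  iInf_le (fun y : {y : M // y ∉ (maximalIdeal R • ⊤ : Submodule R M)} =>
    mdim R (Submodule.span R {y.1})) ⟨y, hy⟩

theorem mem_of_radical_annihilator_eq_maximalIdeal [IsNoetherianRing R] {p : Ideal R}
    [hp : p.IsPrime] (hpm : p ≠ maximalIdeal R) {y : R}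
    (hy : (Submodule.span R {y}).annihilator.radical = maximalIdeal R) : y ∈ p := by
  obtain ⟨n, hn⟩ := Ideal.exists_radical_pow_le_of_fg (R := R) _ (IsNoetherian.noetherian _)
  rw [hy] at hn
  obtain ⟨t, htm, htp⟩ := SetLike.not_le_iff_exists.1 fun hle =>
    hpm (le_antisymm (le_maximalIdeal hp.ne_top) (hp.le_of_pow_le hle))
  have hty : t * y = 0 := (Submodule.mem_annihilator_span_singleton _ _).1 (hn htm)
  exact (hp.mem_or_mem (hty ▸ p.zero_mem)).resolve_left htp

theorem annihilator_maximalIdeal_le {p : Ideal R} [hp : p.IsPrime] (hpm : p ≠ maximalIdeal R) :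
    Module.annihilator R (maximalIdeal R) ≤ p := by
  obtain ⟨t, htm, htp⟩ := SetLike.exists_of_lt ((le_maximalIdeal hp.ne_top).lt_of_ne hpm)
  intro a ha
  have hat : a * t = 0 := congrArg Subtype.val (Module.mem_annihilator.1 ha ⟨t, htm⟩)
  exact (hp.mem_or_mem (hat ▸ p.zero_mem)).resolve_right htp

theorem one_le_ldim_maximalIdeal [IsNoetherianRing R] {x : R} (hx : x ∈ maximalIdeal R)
    [(Ideal.span {x}).IsPrime] (hxm : Ideal.span {x} ≠ maximalIdeal R)
    (hann : (Submodule.span R {x}).annihilator.radical ≠ maximalIdeal R) :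
    1 ≤ ldim R (maximalIdeal R) := by
  refine le_iInf fun y => ?_
  obtain ⟨y, hy⟩ := y
  have : Nontrivial (Submodule.span R {y}) :=
    Submodule.nontrivial_span_singleton fun h => hy (h ▸ zero_mem _)
  refine one_le_mdim_of_radical_annihilator_ne fun h => hann ?_
  rw [annihilator_span_singleton_coe] at h
  obtain ⟨r, hr⟩ :=
    Ideal.mem_span_singleton'.1 (mem_of_radical_annihilator_eq_maximalIdeal hxm h)
  have hru : IsUnit r := notMem_maximalIdeal.1 fun hrm => hy <| by
    rw [Submodule.mem_smul_top_iff, ← hr]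
    exact Submodule.smul_mem_smul hrm hx
  rwa [← hr, show Submodule.span R {r * x} = Submodule.span R {x} from
    Ideal.span_singleton_mul_left_unit hru x] at h

end MaximalIdeal

/-- if `depth R = 0` and `x` is a minimal generator of `m` with `(x)` prime,
`ann(x)` not `m`-primary, `Assh R = {(x)}` and `R_{(x)}` a field, then
`depth_R m < ldim_R m < dim_R m`. -/
theorem stmt_7 (R : Type*) [CommRing R] [IsLocalRing R] [IsNoetherianRing R]
    (hdepth : mdepth R R = 0)
    (x : R) (hx : x ∈ maximalIdeal R) (hx2 : x ∉ maximalIdeal R ^ 2)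
    [hp : (Ideal.span {x}).IsPrime]
    (hann : (Submodule.span R {x} : Submodule R R).annihilator.radical ≠ maximalIdeal R)
    (hAssh : {q : Ideal R | ∃ _ : q.IsPrime, ringKrullDim (R ⧸ q) = ringKrullDim R} =
      {Ideal.span {x}})
    (hfield : IsField (Localization.AtPrime (Ideal.span {x}))) :
    (mdepth R (maximalIdeal R) : WithBot ℕ∞) < ldim R (maximalIdeal R) ∧
      ldim R (maximalIdeal R) < mdim R (maximalIdeal R) := by
  obtain ⟨s, hs, hsx⟩ :=
    exists_notMem_mul_eq_zero_of_isField_localization hfield (Ideal.mem_span_singleton_self x)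
  have hx0 : x ≠ 0 := fun h => hx2 (h ▸ zero_mem _)
  have hxm : Ideal.span {x} ≠ maximalIdeal R := fun h =>
    hx0 ((notMem_maximalIdeal.1 (h ▸ hs)).mul_right_eq_zero.1 hsx)
  have : Nontrivial (maximalIdeal R) := ⟨⟨⟨x, hx⟩, 0, fun h => hx0 (congrArg Subtype.val h)⟩⟩
  obtain ⟨-, hdimx⟩ : Ideal.span {x} ∈
      {q : Ideal R | ∃ _ : q.IsPrime, ringKrullDim (R ⧸ q) = ringKrullDim R} := hAssh ▸ rfl
  have hannx : ¬ (Submodule.span R {x}).annihilator ≤ Ideal.span {x} := fun h =>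
    hs (h ((Submodule.mem_annihilator_span_singleton _ _).2 hsx))
  have hxgen : (⟨x, hx⟩ : maximalIdeal R) ∉
      (maximalIdeal R • ⊤ : Submodule R (maximalIdeal R)) := by
    rwa [Submodule.mem_smul_top_iff, Ideal.smul_eq_mul, ← sq]
  refine ⟨?_, ?_⟩
  · rw [mdepth_maximalIdeal_eq_zero hdepth]
    exact (WithBot.coe_lt_coe.2 zero_lt_one).trans_le (one_le_ldim_maximalIdeal hx hxm hann)
  · calc ldim R (maximalIdeal R)
        ≤ mdim R (Submodule.span R {(⟨x, hx⟩ : maximalIdeal R)}) :=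
          ldim_le_mdim_span_singleton hxgen
      _ = ringKrullDim (R ⧸ (Submodule.span R {x}).annihilator) := by
        rw [mdim_eq_ringKrullDim_quotient_annihilator, annihilator_span_singleton_coe]
      _ < ringKrullDim R := ringKrullDim_quotient_lt_of_not_le hAssh hannx
      _ = ringKrullDim (R ⧸ Ideal.span {x}) := hdimx.symm
      _ ≤ mdim R (maximalIdeal R) :=
        ringKrullDim_quotient_le_mdim (annihilator_maximalIdeal_le hxm)
end

section
/- Let k be a field, R = k[[x,y]]/(x², xy), and m = (x, y) the maximal ideal of R. Then depth_R m = ldim_R m = 0 < 1 = dim_R m, and depth R = 0 < 1 = ldim_R R = dim R. -/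
open IsLocalRing CategoryTheory

/-!
Let `x, y` be the images of the variables. Every element of `m` is a combination `a x + b y`
and `x² = xy = 0`, so `m x = 0`. Moreover `x ∉ m²`: otherwise `X` would lie in
`m² + (X², XY) = m²` in `k⟦X, Y⟧`, and setting `Y = 0` would put `t` into `(t²)` in `k⟦t⟧`.
Hence no element of `m` is regular on `R` or on `m`, and `x` computes `ldim m`, `Rx ≅ k`
having dimension `0`.

Setting `X = 0` instead gives a surjection `R → k⟦t⟧` with nilpotent kernel `(x)`, so
`dim R = dim k⟦t⟧ = 1`. As `m ≠ 0`, an element killing `m` lies in `m`, hence squares to `0`;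
so `Supp m = Spec R`. For `R` itself, the elements outside `m R` are units `u`, and `Ru = R`.
-/

section

variable {R : Type*} [CommRing R] {M : Type*} [AddCommGroup M] [Module R M]

theorem zero_le_mdim [Nontrivial M] : 0 ≤ mdim R M :=
  have := (Module.nonempty_support_of_nontrivial (R := R) (M := M)).to_subtype
  Order.krullDim_nonneg

theorem mdim_eq_ringKrullDim_of_annihilator_le_nilradical [Module.Finite R M]
    (h : Module.annihilator R M ≤ nilradical R) : mdim R M = ringKrullDim R := by
  rw [mdim, Module.support_eq_zeroLocus, (PrimeSpectrum.zeroLocus_eq_univ_iff _).mpr h]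
  exact Order.krullDim_eq_of_orderIso OrderIso.Set.univ

theorem ringKrullDim_eq_of_surjective_of_ker_le_nilradical {S : Type*} [CommRing S]
    (f : R →+* S) (hf : Function.Surjective f) (hker : RingHom.ker f ≤ nilradical R) :
    ringKrullDim R = ringKrullDim S := by
  rw [← ringKrullDim_eq_of_ringEquiv (RingHom.quotientKerEquivOfSurjective hf),
    ringKrullDim_quotient, (PrimeSpectrum.zeroLocus_eq_univ_iff _).mpr hker]
  exact (Order.krullDim_eq_of_orderIso OrderIso.Set.univ).symm

end

theorem IsLocalRing.notMem_maximalIdeal_mul_self_of_surjective {R S : Type*} [CommRing R]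
    [IsLocalRing R] [CommRing S] [IsLocalRing S] {f : R →+* S} (hf : Function.Surjective f)
    {x : R} (hx : f x ∉ maximalIdeal S * maximalIdeal S) :
    x ∉ maximalIdeal R * maximalIdeal R := fun h => hx <| by
  simpa only [Ideal.map_mul, map_maximalIdeal_of_surjective f hf] using Ideal.mem_map_of_mem f h

section LocalRing

variable {R : Type*} [CommRing R] [IsLocalRing R] {M : Type*} [AddCommGroup M] [Module R M]

theorem mdepth_eq_zero_of_smul_eq_zero {w : M} (hw : w ≠ 0)
    (hmw : ∀ r ∈ maximalIdeal R, r • w = 0) : mdepth R M = 0 := by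
  refine nonpos_iff_eq_zero.mp (sSup_le ?_)
  rintro n ⟨_ | ⟨r, rs⟩, rfl, hmem, hreg⟩
  · simp
  · have hr : IsSMulRegular M r :=
      ((RingTheory.Sequence.isWeaklyRegular_cons_iff M r rs).mp hreg.toIsWeaklyRegular).1
    exact absurd (hr.right_eq_zero_of_smul (hmw r (hmem r List.mem_cons_self))) hw

theorem mdim_eq_zero_of_annihilator_eq_maximalIdeal
    (h : Module.annihilator R M = maximalIdeal R) : mdim R M = 0 := by
  have : Nontrivial M := by
    rw [← not_subsingleton_iff_nontrivial, ← Module.annihilator_eq_top_iff (R := R), h]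
    exact (maximalIdeal.isMaximal R).ne_top
  have := (Module.nonempty_support_of_nontrivial (R := R) (M := M)).to_subtype
  have eq_closedPoint {p : PrimeSpectrum R} (hp : p ∈ Module.support R M) :
      p = closedPoint R :=
    PrimeSpectrum.ext ((maximalIdeal.isMaximal R).eq_of_le p.isPrime.ne_top
      (h ▸ Module.annihilator_le_of_mem_support hp)).symm
  have : Subsingleton (Module.support R M) :=
    ⟨fun p q => Subtype.ext ((eq_closedPoint p.2).trans (eq_closedPoint q.2).symm)⟩
  exact Order.krullDim_eq_zero

theorem annihilator_span_singleton_eq_maximalIdeal {w : M} (hw : w ≠ 0)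
    (hmw : ∀ r ∈ maximalIdeal R, r • w = 0) :
    Module.annihilator R (Submodule.span R {w}) = maximalIdeal R := by
  refine le_antisymm (le_maximalIdeal ?_) fun r hr => ?_
  · rwa [Ne, Module.annihilator_eq_top_iff, Submodule.subsingleton_iff_eq_bot,
      Submodule.span_singleton_eq_bot]
  · exact (Submodule.mem_annihilator_span_singleton _ _).mpr (hmw r hr)

theorem ldim_eq_zero_of_smul_eq_zero {w : M}
    (hw : w ∉ (maximalIdeal R • ⊤ : Submodule R M)) (hmw : ∀ r ∈ maximalIdeal R, r • w = 0) :
    ldim R M = 0 := by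
  have ne_zero {z : M} (hz : z ∉ (maximalIdeal R • ⊤ : Submodule R M)) : z ≠ 0 :=
    fun h => hz (h ▸ zero_mem _)
  refine le_antisymm (iInf_le_of_le ⟨w, hw⟩ (mdim_eq_zero_of_annihilator_eq_maximalIdeal
    (annihilator_span_singleton_eq_maximalIdeal (ne_zero hw) hmw)).le) (le_iInf fun z => ?_)
  have := Submodule.nontrivial_span_singleton (R := R) (ne_zero z.2)
  exact zero_le_mdim

theorem ldim_self : ldim R R = ringKrullDim R := by
  have hm : (maximalIdeal R • ⊤ : Submodule R R) = maximalIdeal R := by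
    rw [Ideal.smul_eq_mul, Ideal.mul_top]
  have : Nonempty {x : R // x ∉ (maximalIdeal R • ⊤ : Submodule R R)} := ⟨⟨1, by simp⟩⟩
  refine (iInf_congr fun u => ?_).trans iInf_const
  refine mdim_eq_ringKrullDim_of_annihilator_le_nilradical fun r hr => ?_
  have hu : IsUnit u.1 := by simpa [hm] using u.2
  have hru : r * u.1 = 0 := (Submodule.mem_annihilator_span_singleton _ _).mp hr
  rw [hu.mul_left_eq_zero.mp hru]
  exact zero_mem _

theorem annihilator_maximalIdeal_le_nilradical (h : maximalIdeal R ≠ ⊥) :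
    Module.annihilator R (maximalIdeal R) ≤ nilradical R := by
  intro r hr
  have hrm : r ∈ maximalIdeal R := by
    by_contra hrm
    have hu : IsUnit r := by simpa using hrm
    refine h (eq_bot_iff.mpr fun a ha => ?_)
    exact hu.mul_right_eq_zero.mp (congrArg Subtype.val (Module.mem_annihilator.mp hr ⟨a, ha⟩))
  exact ⟨2, by simpa [sq] using congrArg Subtype.val (Module.mem_annihilator.mp hr ⟨r, hrm⟩)⟩

theorem mdim_maximalIdeal [IsNoetherianRing R] (h : maximalIdeal R ≠ ⊥) :
    mdim R (maximalIdeal R) = ringKrullDim R :=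
  mdim_eq_ringKrullDim_of_annihilator_le_nilradical (annihilator_maximalIdeal_le_nilradical h)

end LocalRing

theorem PowerSeries.X_notMem_maximalIdeal_mul_self {k : Type*} [Field k] :
    (X : PowerSeries k) ∉ maximalIdeal (PowerSeries k) * maximalIdeal (PowerSeries k) := by
  rw [maximalIdeal_eq_span_X, Ideal.span_singleton_mul_span_singleton,
    Ideal.mem_span_singleton]
  intro h
  have : X ∣ (1 : PowerSeries k) := (mul_dvd_mul_iff_left X_ne_zero).mp (by rwa [mul_one])
  simpa using X_dvd_iff.mp this

namespace MvPowerSeries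

theorem X_mem_maximalIdeal {σ k : Type*} [Field k] (i : σ) :
    (X i : MvPowerSeries σ k) ∈ maximalIdeal (MvPowerSeries σ k) := by
  simp [isUnit_iff_constantCoeff]

theorem constantCoeff_killCompl {σ τ R : Type*} [CommSemiring R] (e : τ ↪ σ)
    (f : MvPowerSeries σ R) : constantCoeff (killCompl e f) = constantCoeff f := by
  rw [← coeff_zero_eq_constantCoeff_apply, coeff_killCompl, Finsupp.embDomain_zero,
    coeff_zero_eq_constantCoeff_apply]

theorem X_dvd_sub_rename_killCompl {σ τ R : Type*} [CommRing R] {e : τ ↪ σ} {i : σ}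
    (hi : ∀ t, t ≠ i → t ∈ Set.range e) (f : MvPowerSeries σ R) :
    X i ∣ f - rename e (killCompl e f) := by
  refine X_dvd_iff.mpr fun m hm => ?_
  obtain ⟨n, rfl⟩ : m ∈ Set.range (Finsupp.embDomain e) := by
    rw [Finsupp.mem_range_embDomain_iff]
    intro t ht
    exact hi t fun h => Finsupp.mem_support_iff.mp ht (h ▸ hm)
  rw [map_sub, coeff_embDomain_rename, coeff_killCompl, sub_self]

variable {k : Type*} [Field k]

theorem maximalIdeal_le_span_X_pair :
    maximalIdeal (MvPowerSeries (Fin 2) k) ≤ Ideal.span {X 0, X 1} := by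
  intro f hf
  have hf0 : constantCoeff f = 0 := by simpa [isUnit_iff_constantCoeff] using hf
  let ι : Unit ↪ Fin 2 := Function.Embedding.punit 1
  obtain ⟨g, hg⟩ := X_dvd_sub_rename_killCompl (e := ι) (i := 0) (by decide) f
  obtain ⟨h, hh⟩ : PowerSeries.X ∣ killCompl (R := k) ι f := by
    rw [PowerSeries.X_dvd_iff]
    exact (constantCoeff_killCompl ι f).trans hf0
  have hX : rename ι (PowerSeries.X : PowerSeries k) = X 1 := rename_X ι ()
  rw [hh, map_mul, hX] at hg
  exact Ideal.mem_span_pair.mpr ⟨g, rename ι h, by linear_combination -hg⟩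

theorem X_zero_notMem_maximalIdeal_mul_self :
    (X 0 : MvPowerSeries (Fin 2) k) ∉
      maximalIdeal (MvPowerSeries (Fin 2) k) * maximalIdeal (MvPowerSeries (Fin 2) k) := by
  let ι : Unit ↪ Fin 2 := Function.Embedding.punit 0
  refine IsLocalRing.notMem_maximalIdeal_mul_self_of_surjective
    (f := (killCompl (R := k) ι : _)) (fun p => ⟨rename ι p, killCompl_rename_app p⟩) ?_
  have hX : killCompl (R := k) ι (X 0) = PowerSeries.X := killCompl_X ()
  simpa [hX] using PowerSeries.X_notMem_maximalIdeal_mul_self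

end MvPowerSeries

section EmbeddedPoint

open MvPowerSeries

variable {k : Type*} [Field k]

/-- Its zero locus is the `y`-axis with an embedded point at the origin. -/
noncomputable abbrev embeddedPointIdeal (k : Type*) [Field k] : Ideal (MvPowerSeries (Fin 2) k) :=
  Ideal.span {(X 0 : MvPowerSeries (Fin 2) k) ^ 2, X 0 * X 1}

theorem embeddedPointIdeal_le_maximalIdeal_mul_self :
    embeddedPointIdeal k ≤
      maximalIdeal (MvPowerSeries (Fin 2) k) * maximalIdeal (MvPowerSeries (Fin 2) k) := by
  rw [Ideal.span_le, Set.insert_subset_iff, Set.singleton_subset_iff, sq]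
  exact ⟨Ideal.mul_mem_mul (X_mem_maximalIdeal 0) (X_mem_maximalIdeal 0),
    Ideal.mul_mem_mul (X_mem_maximalIdeal 0) (X_mem_maximalIdeal 1)⟩

theorem ringKrullDim_quotient_embeddedPointIdeal :
    ringKrullDim (MvPowerSeries (Fin 2) k ⧸ embeddedPointIdeal k) = 1 := by
  let ι : Unit ↪ Fin 2 := Function.Embedding.punit 1
  let κ : MvPowerSeries (Fin 2) k →+* PowerSeries k := (killCompl ι).toRingHom
  have hX : κ (X 0) = 0 := killCompl_X_eq_zero (by decide)
  have hI : embeddedPointIdeal k ≤ RingHom.ker κ := by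
    rw [Ideal.span_le, Set.insert_subset_iff, Set.singleton_subset_iff]
    simp [hX]
  have hκ : Function.Surjective (Ideal.Quotient.lift _ κ hI) :=
    Ideal.Quotient.lift_surjective_of_surjective _ _
      fun p => ⟨rename ι p, killCompl_rename_app p⟩
  have hker : RingHom.ker (Ideal.Quotient.lift _ κ hI) ≤ nilradical _ := by
    intro a ha
    obtain ⟨f, rfl⟩ := Ideal.Quotient.mk_surjective a
    obtain ⟨g, rfl⟩ : X 0 ∣ f := by
      simpa [show killCompl ι f = 0 from ha] using
        X_dvd_sub_rename_killCompl (e := ι) (i := 0) (by decide) f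
    refine mem_nilradical.mpr ⟨2, ?_⟩
    rw [← map_pow, Ideal.Quotient.eq_zero_iff_mem, mul_pow]
    exact Ideal.mul_mem_right _ _ (Ideal.subset_span (Set.mem_insert _ _))
  rw [ringKrullDim_eq_of_surjective_of_ker_le_nilradical _ hκ hker,
    IsDiscreteValuationRing.ringKrullDim_eq_one]

variable {R : Type*} [CommRing R] (e : R ≃+* MvPowerSeries (Fin 2) k ⧸ embeddedPointIdeal k)

noncomputable def presentation : MvPowerSeries (Fin 2) k →+* R :=
  e.symm.toRingHom.comp (Ideal.Quotient.mk _)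

theorem presentation_surjective : Function.Surjective (presentation e) :=
  e.symm.surjective.comp Ideal.Quotient.mk_surjective

theorem ker_presentation : RingHom.ker (presentation e) = embeddedPointIdeal k := by
  rw [presentation, RingHom.ker_comp_of_injective _ e.symm.injective, Ideal.mk_ker]

variable [IsLocalRing R]

theorem map_presentation_maximalIdeal :
    (maximalIdeal (MvPowerSeries (Fin 2) k)).map (presentation e) = maximalIdeal R :=
  map_maximalIdeal_of_surjective _ (presentation_surjective e)

theorem presentation_X_zero_mem_maximalIdeal : presentation e (X 0) ∈ maximalIdeal R :=
  map_presentation_maximalIdeal e ▸ Ideal.mem_map_of_mem _ (X_mem_maximalIdeal 0)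

theorem mul_presentation_X_zero {r : R} (hr : r ∈ maximalIdeal R) :
    r * presentation e (X 0) = 0 := by
  have hrel {f} (hf : f ∈ embeddedPointIdeal k) : presentation e f = 0 :=
    (ker_presentation e).ge hf
  have hxx := hrel (Ideal.subset_span (Set.mem_insert _ _))
  have hxy := hrel (Ideal.subset_span (Set.mem_insert_of_mem _ rfl))
  rw [map_pow] at hxx
  rw [map_mul] at hxy
  rw [← map_presentation_maximalIdeal e] at hr
  obtain ⟨a, b, rfl⟩ := Ideal.mem_span_pair.mp <| by
    simpa [Ideal.map_span, Set.image_pair] using Ideal.map_mono maximalIdeal_le_span_X_pair hr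
  linear_combination a * hxx + b * hxy

theorem presentation_X_zero_notMem_maximalIdeal_mul_self :
    presentation e (X 0) ∉ maximalIdeal R * maximalIdeal R := by
  rw [← map_presentation_maximalIdeal e, ← Ideal.map_mul, ← Ideal.mem_comap,
    Ideal.comap_map_of_surjective _ (presentation_surjective e), ← RingHom.ker_eq_comap_bot,
    ker_presentation, sup_eq_left.mpr embeddedPointIdeal_le_maximalIdeal_mul_self]
  exact X_zero_notMem_maximalIdeal_mul_self

end EmbeddedPoint

/-- for `R = k⟦x,y⟧/(x², xy)` with maximal ideal `m = (x,y)`,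
`depth_R m = ldim_R m = 0 < 1 = dim_R m` and `depth R = 0 < 1 = ldim_R R = dim R`. -/
theorem stmt_16 (k : Type*) [Field k] (R : Type*) [CommRing R] [IsLocalRing R]
    [IsNoetherianRing R]
    (e : R ≃+* (MvPowerSeries (Fin 2) k ⧸
      Ideal.span {(MvPowerSeries.X 0 : MvPowerSeries (Fin 2) k) ^ 2,
        (MvPowerSeries.X 0 : MvPowerSeries (Fin 2) k) * MvPowerSeries.X 1})) :
    mdepth R (maximalIdeal R) = 0 ∧ ldim R (maximalIdeal R) = 0 ∧
      mdim R (maximalIdeal R) = 1 ∧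
      mdepth R R = 0 ∧ ldim R R = 1 ∧ ringKrullDim R = 1 := by
  set x := presentation e (MvPowerSeries.X 0)
  have hx_sq : x ∉ maximalIdeal R * maximalIdeal R :=
    presentation_X_zero_notMem_maximalIdeal_mul_self e
  have hx_ne : x ≠ 0 := fun h => hx_sq (h ▸ zero_mem _)
  have hx_mem : x ∈ maximalIdeal R := presentation_X_zero_mem_maximalIdeal e
  have hmx : ∀ r ∈ maximalIdeal R, r • x = 0 := fun _ => mul_presentation_X_zero e
  let w : maximalIdeal R := ⟨x, hx_mem⟩
  have hmw : ∀ r ∈ maximalIdeal R, r • w = 0 := fun r hr => Subtype.ext (hmx r hr)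
  have hw : w ∉ (maximalIdeal R • ⊤ : Submodule R (maximalIdeal R)) := by
    rwa [Submodule.mem_smul_top_iff, Ideal.smul_eq_mul]
  have hm : maximalIdeal R ≠ ⊥ := fun h => hx_ne (by simpa [h] using hx_mem)
  have hdim : ringKrullDim R = 1 :=
    (ringKrullDim_eq_of_ringEquiv e).trans ringKrullDim_quotient_embeddedPointIdeal
  exact ⟨mdepth_eq_zero_of_smul_eq_zero (fun h => hx_ne (congrArg Subtype.val h)) hmw,
    ldim_eq_zero_of_smul_eq_zero hw hmw, (mdim_maximalIdeal hm).trans hdim,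
    mdepth_eq_zero_of_smul_eq_zero hx_ne hmx, ldim_self.trans hdim, hdim⟩
end

section
/- Let (R, m) be a commutative noetherian local ring, x ∈ m, and M = ∏_{n∈ℕ} R/(x^n) the product over all positive integers n. Then ldim_R M = inf { dim R/(x^n) : n ∈ ℕ } = dim R/(x). -/
open IsLocalRing CategoryTheory

section Aux

variable {R : Type*} [CommRing R]

lemma my_krullDim_le_of_subset {α : Type*} [Preorder α] {s t : Set α} (h : s ⊆ t) :
    Order.krullDim s ≤ Order.krullDim t :=
  Order.krullDim_le_of_strictMono (Set.inclusion h) (fun _ _ hab => hab)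

lemma my_ringKrullDim_quotient (I : Ideal R) :
    ringKrullDim (R ⧸ I) = Order.krullDim (PrimeSpectrum.zeroLocus (I : Set R)) := by
  refine Order.krullDim_eq_of_orderIso ?_
  refine
    { toFun := fun q => ⟨PrimeSpectrum.comap (Ideal.Quotient.mk I) q, fun r hr => by
        show Ideal.Quotient.mk I r ∈ q.asIdeal
        rw [Ideal.Quotient.eq_zero_iff_mem.mpr hr]
        exact q.asIdeal.zero_mem⟩
      invFun := fun p => ⟨Ideal.map (Ideal.Quotient.mk I) p.1.asIdeal,
        have := p.1.isPrime
        Ideal.map_isPrime_of_surjective Ideal.Quotient.mk_surjective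
          (by rw [Ideal.mk_ker]; exact p.2)⟩
      left_inv := fun q => PrimeSpectrum.ext
        (Ideal.map_comap_of_surjective _ Ideal.Quotient.mk_surjective q.asIdeal)
      right_inv := fun p => Subtype.ext (PrimeSpectrum.ext (by
        rw [PrimeSpectrum.comap_asIdeal,
          Ideal.comap_map_of_surjective _ Ideal.Quotient.mk_surjective,
          ← RingHom.ker_eq_comap_bot, Ideal.mk_ker]
        exact sup_eq_left.mpr p.2))
      map_rel_iff' := ?_ }
  intro a b
  constructor
  · intro h
    have h' : Ideal.comap (Ideal.Quotient.mk I) a.asIdeal ≤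
        Ideal.comap (Ideal.Quotient.mk I) b.asIdeal := h
    have := Ideal.map_mono (f := Ideal.Quotient.mk I) h'
    rwa [Ideal.map_comap_of_surjective _ Ideal.Quotient.mk_surjective,
      Ideal.map_comap_of_surjective _ Ideal.Quotient.mk_surjective] at this
  · intro h
    show PrimeSpectrum.comap (Ideal.Quotient.mk I) a ≤ PrimeSpectrum.comap (Ideal.Quotient.mk I) b
    rw [← PrimeSpectrum.asIdeal_le_asIdeal]
    exact Ideal.comap_mono ((PrimeSpectrum.asIdeal_le_asIdeal a b).mpr h)

lemma my_mdim_span_singleton {M : Type*} [AddCommGroup M] [Module R M] (z : M) :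
    mdim R (Submodule.span R {z}) =
      Order.krullDim (PrimeSpectrum.zeroLocus ((Submodule.span R {z}).annihilator : Set R)) := by
  have hann : Module.annihilator R ↥(Submodule.span R {z}) =
      (Submodule.span R {z}).annihilator := rfl
  rw [mdim, Module.support_eq_zeroLocus, hann]

lemma my_exists_sum_of_mem_span_smul {M : Type*} [AddCommGroup M] [Module R M]
    (s : Finset R) (z : M) (hz : z ∈ Ideal.span (s : Set R) • (⊤ : Submodule R M)) :
    ∃ y : R → M, z = ∑ a ∈ s, a • y a := by
  classical
  let P : Submodule R M :=
    { carrier := {m | ∃ y : R → M, m = ∑ a ∈ s, a • y a}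
      add_mem' := by
        rintro m1 m2 ⟨y1, rfl⟩ ⟨y2, rfl⟩
        exact ⟨y1 + y2, by simp [smul_add, Finset.sum_add_distrib]⟩
      zero_mem' := ⟨0, by simp⟩
      smul_mem' := by
        rintro c m ⟨y, rfl⟩
        refine ⟨c • y, ?_⟩
        rw [Finset.smul_sum]
        exact Finset.sum_congr rfl fun a _ => (smul_comm a c (y a)).symm }
  suffices h : Ideal.span (s : Set R) • (⊤ : Submodule R M) ≤ P from h hz
  rw [Submodule.smul_le]
  intro r hr n _
  induction hr using Submodule.span_induction with
  | mem a ha =>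
    refine ⟨fun b => if b = a then n else 0, ?_⟩
    simp only [smul_ite, smul_zero]
    rw [Finset.sum_ite_eq' s a (fun b => b • n), if_pos (Finset.mem_coe.mp ha)]
  | zero => rw [zero_smul]; exact P.zero_mem
  | add r1 r2 _ _ ih1 ih2 => rw [add_smul]; exact P.add_mem ih1 ih2
  | smul c r _ ih => rw [smul_eq_mul, mul_smul]; exact P.smul_mem c ih

lemma my_mem_smul_top_pi {ι : Type*} {M : ι → Type*} [∀ i, AddCommGroup (M i)]
    [∀ i, Module R (M i)] {J : Ideal R} (hJ : J.FG) {z : ∀ i, M i}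
    (hz : ∀ i, z i ∈ J • (⊤ : Submodule R (M i))) :
    z ∈ J • (⊤ : Submodule R ((i : ι) → M i)) := by
  obtain ⟨s, rfl⟩ := hJ
  choose y hy using fun i => my_exists_sum_of_mem_span_smul s (z i) (hz i)
  have hz' : z = ∑ a ∈ s, a • (fun i => y i a) := by
    funext i
    rw [hy i]
    simp [Finset.sum_apply]
  rw [hz']
  exact Submodule.sum_mem _ fun a ha =>
    Submodule.smul_mem_smul (Ideal.subset_span ha) trivial

lemma my_smul_top_quot (I J : Ideal R) :
    J • (⊤ : Submodule R (R ⧸ I)) = Submodule.map I.mkQ J := by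
  calc J • (⊤ : Submodule R (R ⧸ I))
      = J • Submodule.map I.mkQ ⊤ := by rw [Submodule.map_top, Submodule.range_mkQ]
    _ = Submodule.map I.mkQ (J • ⊤) := (Submodule.map_smul'' J ⊤ I.mkQ).symm
    _ = Submodule.map I.mkQ J := by rw [Ideal.smul_eq_mul, Ideal.mul_top]

lemma my_one_quot (I : Ideal R) : (1 : R ⧸ I) = Submodule.Quotient.mk (1 : R) := by
  rw [Ideal.Quotient.mk_eq_mk, map_one]

lemma my_smul_one_quot (I : Ideal R) (r : R) :
    r • (1 : R ⧸ I) = Submodule.Quotient.mk r := by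
  rw [my_one_quot, ← Submodule.Quotient.mk_smul, smul_eq_mul, mul_one]

end Aux

set_option maxHeartbeats 1000000 in
/-- for `x ∈ m` and `M = ∏_{n ≥ 1} R/(xⁿ)`, one has
`ldim_R M = inf { dim R/(xⁿ) : n ≥ 1 } = dim R/(x)`. -/
theorem stmt_18 (R : Type*) [CommRing R] [IsLocalRing R] [IsNoetherianRing R]
    (x : R) (hx : x ∈ maximalIdeal R) :
    ldim R ((n : ℕ+) → R ⧸ Ideal.span {x ^ (n : ℕ)}) =
        ⨅ n : ℕ+, ringKrullDim (R ⧸ Ideal.span {x ^ (n : ℕ)}) ∧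
      ldim R ((n : ℕ+) → R ⧸ Ideal.span {x ^ (n : ℕ)}) = ringKrullDim (R ⧸ Ideal.span {x}) := by
  classical
  set D : WithBot ℕ∞ := Order.krullDim (PrimeSpectrum.zeroLocus ({x} : Set R)) with hD
  have hzl : ∀ n : ℕ+, PrimeSpectrum.zeroLocus ((Ideal.span {x ^ (n : ℕ)} : Ideal R) : Set R)
      = PrimeSpectrum.zeroLocus ({x} : Set R) := fun n => by
    rw [PrimeSpectrum.zeroLocus_span, PrimeSpectrum.zeroLocus_singleton_pow x _ n.pos]
  have hdim : ∀ n : ℕ+, ringKrullDim (R ⧸ Ideal.span {x ^ (n : ℕ)}) = D := fun n => by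
    rw [my_ringKrullDim_quotient, hzl n]
  have hx1 : Ideal.span {x ^ ((1 : ℕ+) : ℕ)} ≤ maximalIdeal R := by
    rw [Ideal.span_le, Set.singleton_subset_iff]
    exact Ideal.pow_mem_of_mem _ hx _ one_pos
  set z₀ : (n : ℕ+) → R ⧸ Ideal.span {x ^ (n : ℕ)} := fun n => if n = 1 then 1 else 0 with hz₀
  have hz₀1 : z₀ 1 = 1 := if_pos rfl
  have hz₀mem : z₀ ∉
      (maximalIdeal R • ⊤ : Submodule R ((n : ℕ+) → R ⧸ Ideal.span {x ^ (n : ℕ)})) := by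
    intro h
    have h0 := Submodule.mem_map_of_mem
      (f := LinearMap.proj (R := R) (φ := fun n : ℕ+ => R ⧸ Ideal.span {x ^ (n : ℕ)}) 1) h
    rw [Submodule.map_smul''] at h0
    have hle : maximalIdeal R • Submodule.map
          (LinearMap.proj (R := R) (φ := fun n : ℕ+ => R ⧸ Ideal.span {x ^ (n : ℕ)}) 1) ⊤ ≤
        maximalIdeal R • (⊤ : Submodule R (R ⧸ Ideal.span {x ^ ((1 : ℕ+) : ℕ)})) :=
      smul_mono_right _ le_top
    have h1 := hle h0
    rw [my_smul_top_quot] at h1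
    obtain ⟨u, hu, huz⟩ := h1
    rw [LinearMap.proj_apply, hz₀1, Submodule.mkQ_apply, my_one_quot,
      Submodule.Quotient.eq] at huz
    have h2 : (1 : R) ∈ maximalIdeal R := by
      have := Submodule.sub_mem _ hu (hx1 huz)
      simpa using this
    exact IsLocalRing.notMem_maximalIdeal.mpr isUnit_one h2
  have hann₀ : (Submodule.span R {z₀}).annihilator = Ideal.span {x ^ ((1 : ℕ+) : ℕ)} := by
    ext r
    rw [Submodule.mem_annihilator_span_singleton]
    constructor
    · intro h
      have h1 := congrFun h 1
      rw [Pi.smul_apply, hz₀1, my_smul_one_quot] at h1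
      rw [← Submodule.Quotient.mk_eq_zero]
      exact h1
    · intro hr
      funext n
      rw [Pi.smul_apply, Pi.zero_apply]
      by_cases hn : n = 1
      · subst hn
        rw [hz₀1, my_smul_one_quot, Submodule.Quotient.mk_eq_zero]
        exact hr
      · have : z₀ n = 0 := by simp [hz₀, hn]
        rw [this, smul_zero]
  have hmd₀ : mdim R (Submodule.span R {z₀}) = D := by
    rw [my_mdim_span_singleton, hann₀, hzl 1]
  have main : ldim R ((n : ℕ+) → R ⧸ Ideal.span {x ^ (n : ℕ)}) = D := by
    unfold ldim
    apply le_antisymm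
    · have h1 := iInf_le (fun v : {v : ((n : ℕ+) → R ⧸ Ideal.span {x ^ (n : ℕ)}) //
          v ∉ (maximalIdeal R • ⊤ : Submodule R _)} => mdim R (Submodule.span R {v.1}))
        ⟨z₀, hz₀mem⟩
      exact h1.trans (le_of_eq hmd₀)
    · refine le_iInf fun z => ?_
      obtain ⟨z, hz⟩ := z
      have hex : ∃ n : ℕ+, z n ∉
          Submodule.map (Ideal.span {x ^ (n : ℕ)}).mkQ (maximalIdeal R) := by
        by_contra hcon
        push_neg at hcon
        apply hz
        apply my_mem_smul_top_pi (IsNoetherian.noetherian (maximalIdeal R))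
        intro n
        rw [my_smul_top_quot]
        exact hcon n
      obtain ⟨n, hn⟩ := hex
      obtain ⟨u, hu⟩ := Submodule.mkQ_surjective _ (z n)
      have hunotm : u ∉ maximalIdeal R := fun hm => hn ⟨u, hm, hu⟩
      have huu : IsUnit u := IsLocalRing.notMem_maximalIdeal.mp hunotm
      have hannle : (Submodule.span R {z}).annihilator ≤ Ideal.span {x ^ (n : ℕ)} := by
        intro r hr
        rw [Submodule.mem_annihilator_span_singleton] at hr
        have h1 := congrFun hr n
        rw [Pi.smul_apply, Pi.zero_apply] at h1
        have h2 : (Ideal.span {x ^ (n : ℕ)}).mkQ (r • u) = 0 := by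
          rw [map_smul, hu]
          exact h1
        rw [Submodule.mkQ_apply, Submodule.Quotient.mk_eq_zero] at h2
        obtain ⟨v, hv⟩ := huu.exists_right_inv
        have hru : r = (r • u) * v := by rw [smul_eq_mul, mul_assoc, hv, mul_one]
        rw [hru]
        exact Ideal.mul_mem_right _ _ h2
      rw [my_mdim_span_singleton, hD, ← hzl n]
      exact my_krullDim_le_of_subset
        (PrimeSpectrum.zeroLocus_anti_mono (SetLike.coe_subset_coe.mpr hannle))
  refine ⟨?_, ?_⟩
  · rw [main]
    have : (⨅ n : ℕ+, ringKrullDim (R ⧸ Ideal.span {x ^ (n : ℕ)})) = ⨅ _ : ℕ+, D :=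
      iInf_congr hdim
    rw [this, iInf_const]
  · rw [main, my_ringKrullDim_quotient, PrimeSpectrum.zeroLocus_span]
end
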